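/- For integers m, n ≥ 2, the Italian domination number of the strong product of directed cycles satisfies γ_I(C_m ⊗ C_n) ≥ ⌈mn/2⌉. -/

import Mathlib

/-- An Italian dominating function on a digraph given by adjacency relation `adj`:
`f : V → {0,1,2}` such that every vertex with value 0 has an in-neighbor with value 2
or two distinct in-neighbors with value 1. -/
def IsIDF {V : Type*} (adj : V → V → Prop) (f : V → ℕ) : Prop :=
  (∀ v, f v ≤ 2) ∧ ∀ v, f v = 0 →
    (∃ w, adj w v ∧ f w = 2) ∨
    (∃ w₁ w₂, w₁ ≠ w₂ ∧ adj w₁ v ∧ adj w₂ v ∧ f w₁ = 1 ∧ f w₂ = 1)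

/-- The Italian domination number: minimum weight of an Italian dominating function. -/
noncomputable def italianDomNum (V : Type*) [Fintype V] (adj : V → V → Prop) : ℕ :=
  sInf {w : ℕ | ∃ f : V → ℕ, IsIDF adj f ∧ ∑ v, f v = w}

/-- The directed cycle on `n` vertices: arc `i → i+1 (mod n)`. -/
def cycleAdj (n : ℕ) (i j : Fin n) : Prop := (j : ℕ) = ((i : ℕ) + 1) % n

/-- Cartesian product of digraphs. -/
def cartAdj {α β : Type*} (A : α → α → Prop) (B : β → β → Prop) (x y : α × β) : Prop :=
  (x.1 = y.1 ∧ B x.2 y.2) ∨ (A x.1 y.1 ∧ x.2 = y.2)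

/-- Strong product of digraphs. -/
def strongAdj {α β : Type*} (A : α → α → Prop) (B : β → β → Prop) (x y : α × β) : Prop :=
  (A x.1 y.1 ∧ B x.2 y.2) ∨ (x.1 = y.1 ∧ B x.2 y.2) ∨ (A x.1 y.1 ∧ x.2 = y.2)

/-- Maximum out-degree of a finite digraph. -/
noncomputable def maxOutDeg (V : Type*) [Fintype V] (adj : V → V → Prop) : ℕ :=
  Finset.univ.sup fun v => Nat.card {w | adj v w}

/-- Maximum in-degree of a finite digraph. -/
noncomputable def maxInDeg (V : Type*) [Fintype V] (adj : V → V → Prop) : ℕ :=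
  Finset.univ.sup fun v => Nat.card {w | adj w v}

/-!
Pair each vertex `(i, j)` with `(i, j + 1)` and set `c (i, j) = f (i, j) + f (i, j + 1)`, so that
`∑ c = 2 · w(f)`. If `c (i + 1, j) = 0`, then `(i + 1, j + 1)` has value `0` and its in-neighbours
other than `(i + 1, j)` are `(i, j)` and `(i, j + 1)`, so `c (i, j) ≥ 2`. Along the permutation
`(i, j) ↦ (i + 1, j)` every zero of `c` is thus preceded by a value `≥ 2`, which forces
`∑ c ≥ mn`.
-/

theorem cycleAdj_iff {k : ℕ} [NeZero k] (i j : Fin k) : cycleAdj k i j ↔ j = i + 1 := by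
  rw [cycleAdj, Fin.ext_iff, Fin.val_add, Fin.val_one', Nat.add_mod_mod]

theorem strongAdj_cycleAdj_add_one_iff {m n : ℕ} [NeZero m] [NeZero n] (i : Fin m) (j : Fin n)
    (w : Fin m × Fin n) :
    strongAdj (cycleAdj m) (cycleAdj n) w (i + 1, j + 1) ↔
      w = (i, j) ∨ w = (i + 1, j) ∨ w = (i, j + 1) := by
  obtain ⟨a, b⟩ := w
  simp only [strongAdj, cycleAdj_iff, add_left_inj, Prod.mk.injEq]
  grind

theorem IsIDF.two_le_sum_of_eq_zero {V ι : Type*} [Fintype ι] {adj : V → V → Prop} {f : V → ℕ}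
    (hf : IsIDF adj f) {v : V} (hv : f v = 0) (g : ι → V) (hg : ∀ w, adj w v → w ∈ Set.range g) :
    2 ≤ ∑ k, f (g k) := by
  classical
  rcases hf.2 v hv with ⟨w, hw, hw2⟩ | ⟨w₁, w₂, hne, hw₁, hw₂, hw₁1, hw₂1⟩
  · obtain ⟨k, rfl⟩ := hg w hw
    exact hw2 ▸ Finset.single_le_sum (f := fun k => f (g k)) (fun _ _ => Nat.zero_le _)
      (Finset.mem_univ k)
  · obtain ⟨k₁, rfl⟩ := hg w₁ hw₁
    obtain ⟨k₂, rfl⟩ := hg w₂ hw₂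
    calc 2 = ∑ k ∈ {k₁, k₂}, f (g k) := by
          rw [Finset.sum_pair (ne_of_apply_ne g hne), hw₁1, hw₂1]
      _ ≤ ∑ k, f (g k) := Finset.sum_le_sum_of_subset (Finset.subset_univ _)

theorem Fintype.card_le_sum_of_perm {α : Type*} [Fintype α] (σ : Equiv.Perm α) (c : α → ℕ)
    (h : ∀ a, c (σ a) = 0 → 2 ≤ c a) : Fintype.card α ≤ ∑ a, c a := by
  -- A zero of `c` at `σ a` is paid for by the surplus `c a - 1 ≥ 1`.
  let d : α → ℕ := fun a => if c a = 0 then 1 else 0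
  have hstep : ∀ a, 1 + d (σ a) ≤ c a + d a := by
    intro a
    have := h a
    simp only [d]
    split_ifs <;> omega
  have hsum := Finset.sum_le_sum fun a (_ : a ∈ Finset.univ) => hstep a
  rw [Finset.sum_add_distrib, Finset.sum_add_distrib, Equiv.sum_comp σ d] at hsum
  simpa using hsum

theorem IsIDF.mul_le_two_mul_sum {m n : ℕ} [NeZero m] [NeZero n] {f : Fin m × Fin n → ℕ}
    (hf : IsIDF (strongAdj (cycleAdj m) (cycleAdj n)) f) : m * n ≤ 2 * ∑ v, f v := by
  have hpair : ∀ v : Fin m × Fin n, f (v.1 + 1, v.2) + f (v.1 + 1, v.2 + 1) = 0 →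
      2 ≤ f v + f (v.1, v.2 + 1) := by
    rintro ⟨i, j⟩ h0
    dsimp only at h0 ⊢
    have := hf.two_le_sum_of_eq_zero (v := (i + 1, j + 1)) (by omega)
      ![(i, j), (i + 1, j), (i, j + 1)] fun w hw => by
        rcases (strongAdj_cycleAdj_add_one_iff i j w).1 hw with rfl | rfl | rfl
        exacts [⟨0, rfl⟩, ⟨1, rfl⟩, ⟨2, rfl⟩]
    simp only [Fin.sum_univ_three, Matrix.cons_val] at this
    omega
  have hshift : ∑ v : Fin m × Fin n, f (v.1, v.2 + 1) = ∑ v, f v :=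
    Equiv.sum_comp (Equiv.prodCongr (Equiv.refl _) (Equiv.addRight 1)) f
  calc m * n = Fintype.card (Fin m × Fin n) := by simp
    _ ≤ ∑ v : Fin m × Fin n, (f v + f (v.1, v.2 + 1)) :=
        Fintype.card_le_sum_of_perm (Equiv.prodCongr (Equiv.addRight 1) (Equiv.refl _)) _ hpair
    _ = 2 * ∑ v, f v := by rw [Finset.sum_add_distrib, hshift, two_mul]

theorem le_italianDomNum {V : Type*} [Fintype V] {adj : V → V → Prop} {b : ℕ}
    (h : ∀ f, IsIDF adj f → b ≤ ∑ v, f v) : b ≤ italianDomNum V adj :=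
  le_csInf ⟨_, fun _ => 1, ⟨fun _ => one_le_two, fun _ h1 => absurd h1 one_ne_zero⟩, rfl⟩
    fun _ ⟨f, hf, hw⟩ => hw ▸ h f hf

theorem stmt12_general (m n : ℕ) :
    italianDomNum (Fin m × Fin n) (strongAdj (cycleAdj m) (cycleAdj n)) ≥ (m * n + 1) / 2 := by
  rcases Nat.eq_zero_or_pos m with rfl | hm
  · simp
  rcases Nat.eq_zero_or_pos n with rfl | hn
  · simp
  have := NeZero.of_pos hm
  have := NeZero.of_pos hn
  refine le_italianDomNum fun f hf => ?_
  have := hf.mul_le_two_mul_sum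
  omega

theorem stmt12 (m n : ℕ) (hm : 2 ≤ m) (hn : 2 ≤ n) :
    italianDomNum (Fin m × Fin n) (strongAdj (cycleAdj m) (cycleAdj n)) ≥ (m * n + 1) / 2 :=
  stmt12_general m n
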